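/- Let 0 < α < 1 and let z > 1 be a real number. Then Σ_{t=0}^{∞} [Γ(2t+1+α)/(Γ(α)·(2t+1)!)]·z^{−t} converges and equals z^{(α+1)/2}·[(√z − 1)^{−α} − (√z + 1)^{−α}]/2. -/

import Mathlib

/-!
The coefficients `Γ(α+n)/(Γ(α) n!) = (α)ₙ/n!` are those of the binomial series
`(1 - x)^(-α) = Σ (α)ₙ/n! xⁿ`, `|x| < 1`. With `x = 1/√z` the given series is `√z` times the
odd part of this series, that is `√z ((1 - x)^(-α) - (1 + x)^(-α)) / 2`, which rescales to the
closed form.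
-/

open Real

theorem Real.Gamma_add_nat_div_Gamma {a : ℝ} (ha : 0 < a) (n : ℕ) :
    Gamma (a + n) / Gamma a = (ascPochhammer ℝ n).eval a := by
  induction n with
  | zero => simp [(Gamma_pos_of_pos ha).ne']
  | succ n ih =>
    rw [ascPochhammer_succ_right, Polynomial.eval_mul, ← ih, Nat.cast_succ, ← add_assoc,
      Gamma_add_one (by positivity)]
    simp only [Polynomial.eval_add, Polynomial.eval_X, Polynomial.eval_natCast]
    ring

theorem Ring.choose_add_nat_sub_one {K : Type*} [Field K] [CharZero K] (a : K) (n : ℕ) :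
    Ring.choose (a + n - 1) n = (ascPochhammer K n).eval a / n.factorial := by
  rw [← Ring.multichoose_eq, eq_div_iff (Nat.cast_ne_zero.mpr n.factorial_ne_zero), mul_comm,
    ← nsmul_eq_mul, Ring.factorial_nsmul_multichoose_eq_ascPochhammer,
    Polynomial.ascPochhammer_smeval_eq_eval]

theorem Real.hasSum_Gamma_div_mul_pow {a x : ℝ} (ha : 0 < a) (hx : |x| < 1) :
    HasSum (fun n : ℕ => Gamma (a + n) / (Gamma a * n.factorial) * x ^ n) ((1 - x) ^ (-a)) := by
  have hball : x ∈ Metric.eball (0 : ℝ) 1 := by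
    simpa [enorm_eq_nnnorm, ← NNReal.coe_lt_one] using hx
  have hsum := (one_div_one_sub_rpow_hasFPowerSeriesOnBall_zero a).hasSum hball
  rw [zero_add, one_div, ← rpow_neg (by linarith [le_abs_self x])] at hsum
  refine hsum.congr_fun fun n => ?_
  rw [FormalMultilinearSeries.ofScalars_apply_eq, Ring.choose_add_nat_sub_one,
    ← Gamma_add_nat_div_Gamma ha, smul_eq_mul, div_div]

theorem HasSum.odd_part {K : Type*} [Field K] [TopologicalSpace K] [IsTopologicalRing K]
    [NeZero (2 : K)] {c : ℕ → K} {x A B : K}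
    (hA : HasSum (fun n => c n * x ^ n) A) (hB : HasSum (fun n => c n * (-x) ^ n) B) :
    HasSum (fun t => c (2 * t + 1) * x ^ (2 * t + 1)) ((A - B) / 2) := by
  have hodd : Function.Injective (fun t : ℕ => 2 * t + 1) := fun a b h => by simpa using h
  have heven : ∀ n ∉ Set.range (fun t : ℕ => 2 * t + 1),
      (c n * x ^ n - c n * (-x) ^ n) / 2 = 0 := by
    intro n hn
    have : Even n := Nat.not_odd_iff_even.mp fun ⟨k, hk⟩ => hn ⟨k, hk.symm⟩
    rw [this.neg_pow, sub_self, zero_div]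
  have hsum := (hodd.hasSum_iff heven).mpr ((hA.sub hB).div_const 2)
  refine hsum.congr_fun fun t => ?_
  simp only [Function.comp_apply, (odd_two_mul_add_one t).neg_pow]
  field_simp
  ring

theorem Real.hasSum_Gamma_odd_div_mul_sq_zpow {a s : ℝ} (ha : 0 < a) (hs : 1 < s) :
    HasSum (fun t : ℕ =>
            Gamma (2 * (t : ℝ) + 1 + a) / (Gamma a * ((2 * t + 1).factorial : ℝ)) *
          (s ^ 2) ^ (-(t : ℤ)))
      (s ^ (a + 1) * ((s - 1) ^ (-a) - (s + 1) ^ (-a)) / 2) := by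
  have hs0 : 0 < s := by linarith
  have hx : |s⁻¹| < 1 := by rw [abs_inv, abs_of_pos hs0]; exact inv_lt_one_of_one_lt₀ hs
  have hplus := hasSum_Gamma_div_mul_pow ha (x := -s⁻¹) (by rwa [abs_neg])
  rw [sub_neg_eq_add] at hplus
  have hodd := ((hasSum_Gamma_div_mul_pow ha hx).odd_part hplus).mul_left s
  have hscale : ∀ u : ℝ, 0 < u → s * (u / s) ^ (-a) = s ^ (a + 1) * u ^ (-a) := fun u hu => by
    rw [div_rpow hu.le hs0.le, rpow_neg hs0.le, rpow_add_one hs0.ne']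
    field_simp
  rw [show 1 - s⁻¹ = (s - 1) / s by field_simp, show 1 + s⁻¹ = (s + 1) / s by field_simp,
    mul_div_assoc', mul_sub, hscale _ (by linarith), hscale _ (by linarith), ← mul_sub] at hodd
  refine hodd.congr_fun fun t => ?_
  push_cast
  rw [zpow_neg, zpow_natCast, ← pow_mul, inv_pow, pow_succ, mul_inv, add_comm a]
  field_simp

theorem Z_transform_phi2_general (α z : ℝ) (h0 : 0 < α) (hz : 1 < z) :
    HasSum (fun t : ℕ =>
        Real.Gamma (2 * (t : ℝ) + 1 + α) / (Real.Gamma α * ((2 * t + 1).factorial : ℝ)) *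
          z ^ (-(t : ℤ)))
      (z ^ ((α + 1) / 2) * ((Real.sqrt z - 1) ^ (-α) - (Real.sqrt z + 1) ^ (-α)) / 2) := by
  obtain ⟨s, hs, rfl⟩ : ∃ s, 1 < s ∧ z = s ^ 2 :=
    ⟨√z, by simpa using Real.sqrt_lt_sqrt zero_le_one hz, (Real.sq_sqrt (by linarith)).symm⟩
  have hs0 : 0 ≤ s := by linarith
  have hpow : (s ^ 2) ^ ((α + 1) / 2) = s ^ (α + 1) := by
    rw [← Real.rpow_two, ← Real.rpow_mul hs0, mul_div_cancel₀ _ two_ne_zero]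
  rw [Real.sqrt_sq hs0, hpow]
  exact hasSum_Gamma_odd_div_mul_sq_zpow h0 hs

/-- Z-transform of the odd-index part `φ₂(t) = φ̃_α(2t+1)` of the binomial family:
for real `z > 1`, `Σ Γ(2t+1+α)/(Γ(α)·(2t+1)!)·z^(-t) = z^((α+1)/2)·[(√z-1)^(-α) - (√z+1)^(-α)]/2`. -/
theorem Z_transform_phi2 (α z : ℝ) (h0 : 0 < α) (h1 : α < 1) (hz : 1 < z) :
    HasSum (fun t : ℕ =>
        Real.Gamma (2 * (t : ℝ) + 1 + α) / (Real.Gamma α * ((2 * t + 1).factorial : ℝ)) *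
          z ^ (-(t : ℤ)))
      (z ^ ((α + 1) / 2) * ((Real.sqrt z - 1) ^ (-α) - (Real.sqrt z + 1) ^ (-α)) / 2) :=
  Z_transform_phi2_general α z h0 hz
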